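/- arXiv:2409.03640 — 2 statements merged into one kernel-verified Lean document; each statement's English description precedes it below -/
import Mathlib

section
/- Let X and Y be finite posets such that Y has a free skeleton, and let U be an upset of X. Then every weak p-morphism p : U → Y (where U carries the order induced from X) can be extended to a weak p-morphism p⁺ : X → Y with p⁺(u) = p(u) for all u ∈ U. -/
/-- The set of maximal elements of the subposet `S`. -/
def maxSet {X : Type*} [PartialOrder X] (S : Set X) : Set X :=
  {x | x ∈ S ∧ ∀ y ∈ S, x ≤ y → y = x}

/-- A weak p-morphism: an order preserving map such that for all `x` and all maximal `y`
above `p x` there is a maximal element `z` of `↑x` with `p z = y`. -/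
def IsWeakPMorphism {X Y : Type*} [PartialOrder X] [PartialOrder Y] (p : X → Y) : Prop :=
  Monotone p ∧
    ∀ x : X, ∀ y ∈ maxSet (Set.univ : Set Y), p x ≤ y →
      ∃ z ∈ maxSet (Set.Ici x), p z = y

/-- `s` is a witnessing family for a free skeleton on a poset with least element `bot`:
`s x Y` is the element `s_{x,Y}` (its value is only constrained when `Y` is a nonempty
subset of `max ↑x`). -/
def IsFreeSkeleton {X : Type*} [PartialOrder X] (bot : X) (s : X → Set X → X) : Prop :=
  (∀ (x : X) (Y : Set X), Y.Nonempty → Y ⊆ maxSet (Set.Ici x) →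
      x ≤ s x Y ∧ Y = maxSet (Set.Ici (s x Y))) ∧
  (∀ (x : X) (Y Z : Set X), Y.Nonempty → Z.Nonempty →
      Y ⊆ maxSet (Set.Ici x) → Z ⊆ maxSet (Set.Ici x) → Y ⊆ Z → s x Z ≤ s x Y) ∧
  (∀ (x : X) (Y : Set X), Y.Nonempty → Y ⊆ maxSet (Set.univ : Set X) →
      maxSet (Set.Ici x) ⊆ Y → s bot Y ≤ x)

/-- A poset has a free skeleton when it has a least element together with a witnessing
family `s_{x,Y}` as in `IsFreeSkeleton`. -/
def HasFreeSkeleton (X : Type*) [PartialOrder X] : Prop :=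
  ∃ (bot : X) (s : X → Set X → X), IsBot bot ∧ IsFreeSkeleton bot s

/-!
Fix a maximal element `y₀` of `Y` and let `g : X → Y` be `p` on `U` and `y₀` elsewhere. Every
`x` then determines a nonempty set `Z x = g '' max ↑x` of maximal elements of `Y`, antitone in
`x`, and on `U` the weak p-morphism `p` already satisfies `max ↑(p u) = Z u`. Extend `p` by `y₀`
at maximal points outside `U` and by the skeleton element `s_{⊥, Z x}` at the remaining points,
so that `max ↑(q x) = Z x` everywhere. This identity is the lifting condition of a weak
p-morphism, and together with property (iii) of the skeleton and the antitonicity of `Z` it gives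
monotonicity of `q`.
-/

open Set

section MaxSet

variable {X : Type*} [PartialOrder X]

lemma mem_maxSet_Ici {x m : X} : m ∈ maxSet (Ici x) ↔ x ≤ m ∧ IsMax m :=
  ⟨fun ⟨hxm, h⟩ => ⟨hxm, fun y hmy => (h y (hxm.trans hmy) hmy).le⟩,
    fun ⟨hxm, h⟩ => ⟨hxm, fun _ _ hmy => h.eq_of_ge hmy⟩⟩

lemma mem_maxSet_univ {m : X} : m ∈ maxSet (univ : Set X) ↔ IsMax m :=
  ⟨fun ⟨_, h⟩ y hmy => (h y trivial hmy).le, fun h => ⟨trivial, fun _ _ hmy => h.eq_of_ge hmy⟩⟩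

lemma IsMax.maxSet_Ici {x : X} (hx : IsMax x) : maxSet (Ici x) = {x} := by
  ext m
  rw [mem_maxSet_Ici, mem_singleton_iff]
  constructor
  · exact fun ⟨hxm, _⟩ => hx.eq_of_ge hxm
  · rintro rfl
    exact ⟨le_rfl, hx⟩

lemma maxSet_Ici_subset_of_le {a b : X} (hab : a ≤ b) : maxSet (Ici b) ⊆ maxSet (Ici a) :=
  fun _ hm => mem_maxSet_Ici.2 ⟨hab.trans (mem_maxSet_Ici.1 hm).1, (mem_maxSet_Ici.1 hm).2⟩

lemma maxSet_Ici_nonempty [Finite X] (x : X) : (maxSet (Ici x)).Nonempty := by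
  obtain ⟨m, hxm, hm⟩ := Finite.exists_le_maximal (p := fun _ : X => True) (a := x) trivial
  exact ⟨m, mem_maxSet_Ici.2 ⟨hxm, maximal_true.1 hm⟩⟩

lemma IsUpperSet.isMax_coe_iff {U : Set X} (hU : IsUpperSet U) {u : U} :
    IsMax (u : X) ↔ IsMax u :=
  ⟨fun h _ huv => h huv, fun h y huy => h (show u ≤ ⟨y, hU huy u.2⟩ from huy)⟩

lemma IsUpperSet.maxSet_Ici_coe {U : Set X} (hU : IsUpperSet U) (u : U) :
    maxSet (Ici (u : X)) = Subtype.val '' maxSet (Ici u) := by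
  ext m
  constructor
  · intro hm
    rw [mem_maxSet_Ici] at hm
    exact ⟨⟨m, hU hm.1 u.2⟩, mem_maxSet_Ici.2 ⟨hm.1, hU.isMax_coe_iff.1 hm.2⟩, rfl⟩
  · rintro ⟨v, hv, rfl⟩
    rw [mem_maxSet_Ici] at hv ⊢
    exact ⟨hv.1, hU.isMax_coe_iff.2 hv.2⟩

end MaxSet

section WeakPMorphism

variable {X Y : Type*} [PartialOrder X] [PartialOrder Y]

lemma isWeakPMorphism_of_maxSet_Ici_subset {q : X → Y} (hq : Monotone q)
    (h : ∀ x, maxSet (Ici (q x)) ⊆ q '' maxSet (Ici x)) : IsWeakPMorphism q :=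
  ⟨hq, fun x _ hy hxy => h x (mem_maxSet_Ici.2 ⟨hxy, mem_maxSet_univ.1 hy⟩)⟩

lemma IsWeakPMorphism.isMax_apply [Finite Y] {p : X → Y} (hp : IsWeakPMorphism p) {m : X}
    (hm : IsMax m) : IsMax (p m) := by
  obtain ⟨y, hy⟩ := maxSet_Ici_nonempty (p m)
  rw [mem_maxSet_Ici] at hy
  obtain ⟨z, hz, rfl⟩ := hp.2 m y (mem_maxSet_univ.2 hy.2) hy.1
  rw [hm.eq_of_le (mem_maxSet_Ici.1 hz).1]
  exact hy.2

lemma IsWeakPMorphism.maxSet_Ici_apply [Finite Y] {p : X → Y} (hp : IsWeakPMorphism p)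
    (x : X) : maxSet (Ici (p x)) = p '' maxSet (Ici x) := by
  refine Subset.antisymm (fun y hy => ?_) ?_
  · rw [mem_maxSet_Ici] at hy
    exact hp.2 x y (mem_maxSet_univ.2 hy.2) hy.1
  · rintro _ ⟨m, hm, rfl⟩
    rw [mem_maxSet_Ici] at hm ⊢
    exact ⟨hp.1 hm.1, hp.isMax_apply hm.2⟩

end WeakPMorphism

namespace IsFreeSkeleton

variable {Y : Type*} [PartialOrder Y] {bot : Y} {s : Y → Set Y → Y} {Z : Set Y}

lemma maxSet_Ici_apply_bot (hs : IsFreeSkeleton bot s) (hbot : IsBot bot) (hZ : Z.Nonempty)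
    (hZmax : ∀ y ∈ Z, IsMax y) : maxSet (Ici (s bot Z)) = Z :=
  (hs.1 bot Z hZ fun y hy => mem_maxSet_Ici.2 ⟨hbot y, hZmax y hy⟩).2.symm

lemma apply_bot_le (hs : IsFreeSkeleton bot s) (hZ : Z.Nonempty) (hZmax : ∀ y ∈ Z, IsMax y)
    {y : Y} (h : maxSet (Ici y) ⊆ Z) : s bot Z ≤ y :=
  hs.2.2 y Z hZ (fun z hz => mem_maxSet_univ.2 (hZmax z hz)) h

end IsFreeSkeleton

section Extension

variable {X Y : Type*} {U : Set X} {p : U → Y} {y₀ : Y}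

open Classical in
noncomputable def extendByConst (p : U → Y) (y₀ : Y) (x : X) : Y :=
  if h : x ∈ U then p ⟨x, h⟩ else y₀

lemma extendByConst_coe (u : U) : extendByConst p y₀ u = p u :=
  dif_pos u.2

variable [PartialOrder X] {bot : Y} {s : Y → Set Y → Y}

open Classical in
noncomputable def skeletonExtension (s : Y → Set Y → Y) (bot : Y) (p : U → Y) (y₀ : Y)
    (x : X) : Y :=
  if x ∈ U ∨ IsMax x then extendByConst p y₀ x
  else s bot (extendByConst p y₀ '' maxSet (Ici x))

lemma skeletonExtension_of_mem_or_isMax {x : X} (hx : x ∈ U ∨ IsMax x) :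
    skeletonExtension s bot p y₀ x = extendByConst p y₀ x :=
  if_pos hx

lemma skeletonExtension_of_not_mem_or_isMax {x : X} (hx : ¬(x ∈ U ∨ IsMax x)) :
    skeletonExtension s bot p y₀ x = s bot (extendByConst p y₀ '' maxSet (Ici x)) :=
  if_neg hx

lemma skeletonExtension_coe (u : U) : skeletonExtension s bot p y₀ u = p u := by
  rw [skeletonExtension_of_mem_or_isMax (.inl u.2), extendByConst_coe]

lemma image_maxSet_Ici_skeletonExtension (x : X) :
    skeletonExtension s bot p y₀ '' maxSet (Ici x) = extendByConst p y₀ '' maxSet (Ici x) :=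
  image_congr fun _ hm => skeletonExtension_of_mem_or_isMax (.inr (mem_maxSet_Ici.1 hm).2)

variable [PartialOrder Y]

lemma isMax_extendByConst [Finite Y] (hU : IsUpperSet U) (hp : IsWeakPMorphism p)
    (hy₀ : IsMax y₀) {m : X} (hm : IsMax m) : IsMax (extendByConst p y₀ m) := by
  unfold extendByConst
  split_ifs with h
  · exact hp.isMax_apply (hU.isMax_coe_iff (u := ⟨m, h⟩) |>.1 hm)
  · exact hy₀

lemma isMax_of_mem_extendByConst_image [Finite Y] (hU : IsUpperSet U) (hp : IsWeakPMorphism p)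
    (hy₀ : IsMax y₀) (x : X) : ∀ y ∈ extendByConst p y₀ '' maxSet (Ici x), IsMax y := by
  rintro _ ⟨m, hm, rfl⟩
  exact isMax_extendByConst hU hp hy₀ (mem_maxSet_Ici.1 hm).2

lemma maxSet_Ici_skeletonExtension [Finite X] [Finite Y] (hs : IsFreeSkeleton bot s)
    (hbot : IsBot bot) (hU : IsUpperSet U) (hp : IsWeakPMorphism p) (hy₀ : IsMax y₀) (x : X) :
    maxSet (Ici (skeletonExtension s bot p y₀ x)) =
      skeletonExtension s bot p y₀ '' maxSet (Ici x) := by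
  rw [image_maxSet_Ici_skeletonExtension]
  by_cases hxU : x ∈ U
  · lift x to U using hxU
    rw [skeletonExtension_coe, hp.maxSet_Ici_apply, hU.maxSet_Ici_coe, image_image]
    simp only [extendByConst_coe]
  by_cases hxmax : IsMax x
  · rw [skeletonExtension_of_mem_or_isMax (.inr hxmax), hxmax.maxSet_Ici, image_singleton,
      (isMax_extendByConst hU hp hy₀ hxmax).maxSet_Ici]
  rw [skeletonExtension_of_not_mem_or_isMax (not_or.2 ⟨hxU, hxmax⟩)]
  exact hs.maxSet_Ici_apply_bot hbot ((maxSet_Ici_nonempty x).image _)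
    (isMax_of_mem_extendByConst_image hU hp hy₀ x)

lemma monotone_skeletonExtension [Finite X] [Finite Y] (hs : IsFreeSkeleton bot s)
    (hbot : IsBot bot) (hU : IsUpperSet U) (hp : IsWeakPMorphism p) (hy₀ : IsMax y₀) :
    Monotone (skeletonExtension s bot p y₀) := by
  intro a b hab
  by_cases ha : a ∈ U ∨ IsMax a
  · rcases ha with haU | hamax
    · lift a to U using haU
      lift b to U using hU hab a.2
      rw [skeletonExtension_coe, skeletonExtension_coe]
      exact hp.1 hab
    · rw [hamax.eq_of_le hab]
  rw [skeletonExtension_of_not_mem_or_isMax ha]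
  refine hs.apply_bot_le ((maxSet_Ici_nonempty a).image _)
    (isMax_of_mem_extendByConst_image hU hp hy₀ a) ?_
  rw [maxSet_Ici_skeletonExtension hs hbot hU hp hy₀, image_maxSet_Ici_skeletonExtension]
  exact image_mono (maxSet_Ici_subset_of_le hab)

end Extension

/-- Let `X` and `Y` be finite posets such that `Y` has a free skeleton and let `U` be an
upset of `X`. Then every weak p-morphism `p : U → Y` (where `U` carries the induced order)
extends to a weak p-morphism `p⁺ : X → Y`. -/
theorem weakPMorphism_extension
    {X Y : Type*} [PartialOrder X] [PartialOrder Y] [Finite X] [Finite Y]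
    (hY : HasFreeSkeleton Y) (U : Set X) (hU : IsUpperSet U)
    (p : U → Y) (hp : IsWeakPMorphism p) :
    ∃ q : X → Y, IsWeakPMorphism q ∧ ∀ u : U, q u = p u := by
  obtain ⟨bot, s, hbot, hs⟩ := hY
  obtain ⟨y₀, hy₀⟩ := maxSet_Ici_nonempty bot
  have hy₀max : IsMax y₀ := (mem_maxSet_Ici.1 hy₀).2
  refine ⟨skeletonExtension s bot p y₀, ?_, skeletonExtension_coe⟩
  exact isWeakPMorphism_of_maxSet_Ici_subset (monotone_skeletonExtension hs hbot hU hp hy₀max)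
    fun x => (maxSet_Ici_skeletonExtension hs hbot hU hp hy₀max x).subset
end

section
/- Let A and B be finite pseudocomplemented distributive lattices and let h : A → B be a surjective homomorphism. Then for every b ∈ B: b is join-irreducible in B if and only if there exists a join-irreducible element a of A such that h(a) = b and b is different from the join of the set {h(c) : c join-irreducible in A and c < a}. -/
/-- An element of a lattice with a least element is join-irreducible if it is nonzero and
`a = b ⊔ c` implies `a = b` or `a = c`. -/
def JoinIrr {A : Type*} [Lattice A] [OrderBot A] (a : A) : Prop :=
  a ≠ ⊥ ∧ ∀ b c : A, a = b ⊔ c → a = b ∨ a = c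

/-!
Let `a` be a minimal element of the fibre `h⁻¹(b)`. Decomposing `a` into join-irreducibles
and using that `h` preserves finite joins shows that `a` is join-irreducible whenever `b` is.
Conversely, if `a` is join-irreducible and minimal in its fibre, a decomposition `b = u ⊔ v`
lifts, by surjectivity and meets with `a`, to `x ⊔ y ≤ a` with `h x = u`, `h y = v`;
minimality forces `x ⊔ y = a`, so `b = u` or `b = v`. Finally, for join-irreducible `a`,
minimality in the fibre is exactly the condition `h a ≠ ⋁ {h c : c join-irreducible, c < a}`,
since every `z < a` is a join of join-irreducibles below `a`.
-/

theorem joinIrr_iff_supIrred {A : Type*} [Lattice A] [OrderBot A] {a : A} :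
    JoinIrr a ↔ SupIrred a := by
  simp only [JoinIrr, SupIrred, isMin_iff_eq_bot, ne_eq, @eq_comm _ a]

theorem exists_le_map_eq_of_le_map {A B F : Type*} [SemilatticeInf A] [SemilatticeInf B]
    [FunLike F A B] [InfHomClass F A B] (f : F) (hf : Function.Surjective f) {a : A} {u : B}
    (hu : u ≤ f a) : ∃ x ≤ a, f x = u := by
  obtain ⟨x, rfl⟩ := hf u
  exact ⟨x ⊓ a, inf_le_right, by rw [map_inf, inf_eq_left.mpr hu]⟩

section SupHom

variable {A B F : Type*} [SemilatticeSup A] [OrderBot A] [WellFoundedLT A]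
  [SemilatticeSup B] [OrderBot B] [FunLike F A B] [SupHomClass F A B] (f : F)

theorem map_le_finset_sup_of_lt (hf_bot : f ⊥ = ⊥) {S : Finset B} {a z : A}
    (hS : ∀ c, SupIrred c → c < a → f c ∈ S) (hz : z < a) : f z ≤ S.sup id := by
  obtain ⟨s, rfl, hs⟩ := exists_supIrred_decomposition z
  rw [Finset.apply_sup_eq_sup_comp f (map_sup f) hf_bot]
  exact Finset.sup_le fun c hc =>
    Finset.le_sup (f := id) (hS c (hs hc) ((Finset.le_sup (f := id) hc).trans_lt hz))

theorem SupIrred.of_map_of_minimal (hf_bot : f ⊥ = ⊥) {a : A} {b : B}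
    (hb : SupIrred b) (ha : Minimal (f · = b) a) : SupIrred a := by
  obtain ⟨s, hsa, hs⟩ := exists_supIrred_decomposition a
  have hsup : s.sup f = b := by
    rw [← ha.prop, ← hsa, Finset.apply_sup_eq_sup_comp f (map_sup f) hf_bot]; rfl
  obtain ⟨c, hcs, hcb⟩ := hb.finset_sup_eq hsup
  have hca : c ≤ a := hsa ▸ Finset.le_sup (f := id) hcs
  exact ha.eq_of_le hcb hca ▸ hs hcs

end SupHom

theorem SupIrred.map_of_minimal {A B F : Type*} [Lattice A] [OrderBot A] [Lattice B] [OrderBot B]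
    [FunLike F A B] [LatticeHomClass F A B] (f : F) (hf : Function.Surjective f)
    (hf_bot : f ⊥ = ⊥) {a : A} {b : B} (ha : SupIrred a) (hmin : Minimal (f · = b) a) :
    SupIrred b := by
  have hb : f a = b := hmin.prop
  refine ⟨fun hb_min => ?_, fun u v huv => ?_⟩
  · refine hmin.not_prop_of_lt (bot_lt_iff_ne_bot.mpr ha.ne_bot) ?_
    rw [hf_bot, hb_min.eq_bot]
  have hua : u ≤ f a := hb ▸ huv ▸ le_sup_left
  have hva : v ≤ f a := hb ▸ huv ▸ le_sup_right
  obtain ⟨x, hxa, rfl⟩ := exists_le_map_eq_of_le_map f hf hua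
  obtain ⟨y, hya, rfl⟩ := exists_le_map_eq_of_le_map f hf hva
  have hxy : x ⊔ y = a := hmin.eq_of_le (by rw [map_sup, huv]) (sup_le hxa hya)
  rcases ha.2 hxy with hx | hy
  · exact Or.inl (by rw [hx, hb])
  · exact Or.inr (by rw [hy, hb])

theorem joinIrr_iff_image_of_joinIrr_general
    {A B : Type*} [DistribLattice A] [BoundedOrder A] [Finite A]
    [DistribLattice B] [BoundedOrder B] [Finite B]
    (h : A → B) (hsurj : Function.Surjective h)
    (hinf : ∀ x y, h (x ⊓ y) = h x ⊓ h y) (hsup : ∀ x y, h (x ⊔ y) = h x ⊔ h y)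
    (hbot : h ⊥ = ⊥)
    (b : B) :
    JoinIrr b ↔ ∃ a : A, JoinIrr a ∧ h a = b ∧
      b ≠ (Set.toFinite {d : B | ∃ c : A, JoinIrr c ∧ c < a ∧ h c = d}).toFinset.sup id := by
  let f : LatticeHom A B := ⟨⟨h, hsup⟩, hinf⟩
  simp only [joinIrr_iff_supIrred]
  constructor
  · intro hb
    obtain ⟨x, hx⟩ := hsurj b
    obtain ⟨a, ha⟩ := exists_minimal_of_wellFoundedLT (f · = b) ⟨x, hx⟩
    refine ⟨a, hb.of_map_of_minimal f hbot ha, ha.prop, fun hb_eq => ?_⟩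
    obtain ⟨d, hd, hdb⟩ := hb.finset_sup_eq hb_eq.symm
    obtain ⟨c, -, hca, rfl⟩ := (Set.Finite.mem_toFinset _).mp hd
    exact ha.not_prop_of_lt hca hdb
  · rintro ⟨a, ha, rfl, hne⟩
    refine ha.map_of_minimal f hsurj hbot
      (minimal_iff_forall_lt.mpr ⟨rfl, fun z hz hfz => hne ?_⟩)
    refine le_antisymm ?_ (Finset.sup_le fun d hd => ?_)
    · exact hfz ▸ map_le_finset_sup_of_lt f hbot
        (fun c hc hca => (Set.Finite.mem_toFinset _).mpr ⟨c, hc, hca, rfl⟩) hz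
    · obtain ⟨c, -, hca, rfl⟩ := (Set.Finite.mem_toFinset _).mp hd
      exact OrderHomClass.mono f hca.le

/-- Let `A` and `B` be finite pseudocomplemented distributive lattices (bounded distributive
lattices with operations `negA`, `negB` satisfying `x ≤ ¬y ↔ x ⊓ y = ⊥`) and let `h : A → B`
be a surjective homomorphism (preserving `⊓`, `⊔`, `¬`, `⊥`, `⊤`). Then `b ∈ B` is
join-irreducible iff there is a join-irreducible `a ∈ A` with `h a = b` such that `b` differs
from the join of the set `{h c : c join-irreducible in A, c < a}` (empty join being `⊥`). -/
theorem joinIrr_iff_image_of_joinIrr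
    {A B : Type*} [DistribLattice A] [BoundedOrder A] [Finite A]
    [DistribLattice B] [BoundedOrder B] [Finite B]
    (negA : A → A) (hA : ∀ x y : A, x ≤ negA y ↔ x ⊓ y = ⊥)
    (negB : B → B) (hB : ∀ x y : B, x ≤ negB y ↔ x ⊓ y = ⊥)
    (h : A → B) (hsurj : Function.Surjective h)
    (hinf : ∀ x y, h (x ⊓ y) = h x ⊓ h y) (hsup : ∀ x y, h (x ⊔ y) = h x ⊔ h y)
    (hnegh : ∀ x, h (negA x) = negB (h x)) (hbot : h ⊥ = ⊥) (htop : h ⊤ = ⊤)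
    (b : B) :
    JoinIrr b ↔ ∃ a : A, JoinIrr a ∧ h a = b ∧
      b ≠ (Set.toFinite {d : B | ∃ c : A, JoinIrr c ∧ c < a ∧ h c = d}).toFinset.sup id :=
  joinIrr_iff_image_of_joinIrr_general h hsurj hinf hsup hbot b
end
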